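/- arXiv:2403.05746 — 8 statements merged into one kernel-verified Lean document; each statement's English description precedes it below -/
import Mathlib

section
/- Let L be a real symmetric positive semi-definite N×N matrix (a weighted graph Laplacian) and A a real diagonal N×N matrix with positive diagonal entries. Let μ ∈ ℂ and w₁ ∈ ℂ^N, w₁ ≠ 0, satisfy μ²w₁ + μAw₁ + Lw₁ = 0. Then Re(μ) ≤ 0. -/
/-!
Pairing the equation with `star w` gives `‖w‖² μ² + s μ + q = 0`, where `‖w‖² > 0`,
`s = ∑ aᵢ |wᵢ|² ≥ 0` and `q = w* L w ≥ 0` (the complexification of a real positive semidefinite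
matrix is positive semidefinite). A quadratic with such coefficients has no root with positive
real part: its imaginary part forces either `μ` real, where every term is nonnegative, or
`Re μ = -s / (2 ‖w‖²)`.
-/

open Matrix Complex

open scoped ComplexOrder in
theorem Complex.re_nonpos_of_quadratic_eq_zero {c s q μ : ℂ} (hc : 0 < c) (hs : 0 ≤ s)
    (hq : 0 ≤ q) (h : c * μ ^ 2 + s * μ + q = 0) : μ.re ≤ 0 := by
  obtain ⟨hc, hc'⟩ := Complex.pos_iff.mp hc
  obtain ⟨hs, hs'⟩ := Complex.nonneg_iff.mp hs
  obtain ⟨hq, hq'⟩ := Complex.nonneg_iff.mp hq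
  have hre := congrArg re h
  have him := congrArg im h
  simp only [add_re, add_im, mul_re, mul_im, pow_two, ← hc', ← hs', ← hq', zero_re, zero_im]
    at hre him
  by_contra! hμ
  have hμ_im : μ.im = 0 := by
    have : μ.im * (2 * c.re * μ.re + s.re) = 0 := by linear_combination him
    exact (mul_eq_zero.mp this).resolve_right (by positivity)
  rw [hμ_im] at hre
  nlinarith [mul_pos hc (mul_pos hμ hμ), mul_nonneg hs hμ.le]

open scoped ComplexOrder in
theorem Matrix.PosSemidef.map_ofReal {𝕜 n : Type*} [RCLike 𝕜] [Fintype n] {L : Matrix n n ℝ}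
    (hL : L.PosSemidef) : (L.map (algebraMap ℝ 𝕜)).PosSemidef := by
  classical
  open scoped MatrixOrder in
  obtain ⟨B, rfl⟩ := CStarAlgebra.nonneg_iff_eq_star_mul_self.mp hL.nonneg
  rw [Matrix.map_mul, star_eq_conjTranspose, conjTranspose_map _ (fun _ => by simp)]
  exact posSemidef_conjTranspose_mul_self _

open scoped ComplexOrder in
theorem quadratic_eigenvalue_nonpositive_re
    (N : ℕ) (L : Matrix (Fin N) (Fin N) ℝ) (hL : L.PosSemidef)
    (a : Fin N → ℝ) (ha : ∀ i, 0 < a i)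
    (μ : ℂ) (w : Fin N → ℂ) (hw : w ≠ 0)
    (heq : ∀ i, μ ^ 2 * w i + μ * (a i : ℂ) * w i
      + ((L.map (algebraMap ℝ ℂ)) *ᵥ w) i = 0) :
    μ.re ≤ 0 := by
  set Lℂ := L.map (algebraMap ℝ ℂ)
  set damping := ∑ i, (a i : ℂ) * (star (w i) * w i)
  have hform : (star w ⬝ᵥ w) * μ ^ 2 + damping * μ + star w ⬝ᵥ (Lℂ *ᵥ w) = 0 :=
    calc _ = ∑ i, star (w i) * (μ ^ 2 * w i + μ * (a i : ℂ) * w i + (Lℂ *ᵥ w) i) := by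
          simp only [dotProduct, damping, Pi.star_apply, Finset.sum_mul,
            ← Finset.sum_add_distrib]
          exact Finset.sum_congr rfl fun i _ => by ring
      _ = 0 := Finset.sum_eq_zero fun i _ => by rw [heq i, mul_zero]
  have hdamping : 0 ≤ damping := Finset.sum_nonneg fun i _ =>
    mul_nonneg (by exact_mod_cast (ha i).le) (star_mul_self_nonneg _)
  exact re_nonpos_of_quadratic_eq_zero (dotProduct_star_self_pos_iff.mpr hw) hdamping
    (hL.map_ofReal.dotProduct_mulVec_nonneg w) hform
end

section
/- Under the assumptions of the previous statement, if additionally L is the Laplacian of a connected graph (so ker L is spanned by the all-ones vector) and μ²w₁ + μAw₁ + Lw₁ = 0 with Re(μ) = 0 (i.e. μ purely imaginary or zero) and w₁ ≠ 0, then μ = 0 and w₁ is proportional to the all-ones vector. -/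
open Matrix Complex

theorem neutral_mode_is_global_phase_shift
    (N : ℕ) (L : Matrix (Fin N) (Fin N) ℝ) (hL : L.PosSemidef)
    (hker : ∀ x : Fin N → ℝ, L *ᵥ x = 0 → ∃ c : ℝ, x = fun _ => c)
    (a : Fin N → ℝ) (ha : ∀ i, 0 < a i)
    (μ : ℂ) (w : Fin N → ℂ) (hw : w ≠ 0)
    (heq : ∀ i, μ ^ 2 * w i + μ * (a i : ℂ) * w i
      + ((L.map (algebraMap ℝ ℂ)) *ᵥ w) i = 0)
    (hre : μ.re = 0) :
    μ = 0 ∧ ∃ c : ℂ, w = fun _ => c := by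
  classical
  set x : Fin N → ℝ := fun i => (w i).re with hxdef
  set y : Fin N → ℝ := fun i => (w i).im with hydef
  have hw' : ∀ i, w i = (x i : ℂ) + (y i : ℂ) * Complex.I := by
    intro i; simp [hxdef, hydef]
  -- decomposition of complexified mulVec
  have hmv : ∀ i, ((L.map (algebraMap ℝ ℂ)) *ᵥ w) i
      = (((L *ᵥ x) i : ℝ) : ℂ) + (((L *ᵥ y) i : ℝ) : ℂ) * Complex.I := by
    intro i
    simp only [Matrix.mulVec, dotProduct, Matrix.map_apply, algebraMap_apply]
    push_cast
    rw [Finset.sum_mul, ← Finset.sum_add_distrib]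
    refine Finset.sum_congr rfl fun j _ => ?_
    rw [hw' j]; simp only [Complex.coe_algebraMap]; ring
  -- summed quadratic form equation
  have h0 : ∑ i, (starRingEnd ℂ) (w i) *
      (μ ^ 2 * w i + μ * (a i : ℂ) * w i + ((L.map (algebraMap ℝ ℂ)) *ᵥ w) i) = 0 :=
    Finset.sum_eq_zero fun i _ => by rw [heq i, mul_zero]
  set p : Fin N → ℝ := L *ᵥ x with hp
  set q : Fin N → ℝ := L *ᵥ y with hq
  have hterm : ∀ i, (starRingEnd ℂ) (w i) *
      (μ ^ 2 * w i + μ * (a i : ℂ) * w i + ((L.map (algebraMap ℝ ℂ)) *ᵥ w) i)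
      = μ ^ 2 * ((Complex.normSq (w i) : ℝ) : ℂ)
        + μ * ((a i * Complex.normSq (w i) : ℝ) : ℂ)
        + (((x i * p i + y i * q i : ℝ) : ℂ)
          + ((x i * q i - y i * p i : ℝ) : ℂ) * Complex.I) := by
    intro i
    rw [hmv i]
    rw [show (starRingEnd ℂ) (w i) = (x i : ℂ) - (y i : ℂ) * Complex.I by
      rw [hw' i]; simp [Complex.ext_iff]]
    rw [hw' i, Complex.normSq_apply]
    push_cast
    ring_nf
    simp [Complex.I_sq]
    ring
  have hbig : μ ^ 2 * ((∑ i, Complex.normSq (w i) : ℝ) : ℂ)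
      + μ * ((∑ i, a i * Complex.normSq (w i) : ℝ) : ℂ)
      + (((x ⬝ᵥ p + y ⬝ᵥ q : ℝ) : ℂ) + ((x ⬝ᵥ q - y ⬝ᵥ p : ℝ) : ℂ) * Complex.I) = 0 := by
    rw [← h0]
    simp only [hterm]
    push_cast [dotProduct]
    simp only [sub_mul, Finset.sum_add_distrib, Finset.sum_sub_distrib, ← Finset.mul_sum,
      ← Finset.sum_mul]
  -- symmetry kills the cross term
  have hLsymm : Lᵀ = L := by
    ext i j
    rw [Matrix.transpose_apply, ← hL.1.apply i j, star_trivial]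
  have hcross : x ⬝ᵥ q - y ⬝ᵥ p = 0 := by
    have : x ⬝ᵥ q = y ⬝ᵥ p := by
      rw [hq, hp, Matrix.dotProduct_mulVec, ← Matrix.mulVec_transpose, hLsymm,
        dotProduct_comm]
    rw [this, sub_self]
  rw [hcross] at hbig
  -- imaginary part gives μ.im = 0
  have hn1 : 0 < ∑ i, a i * Complex.normSq (w i) := by
    obtain ⟨i0, hi0⟩ := Function.ne_iff.mp hw
    refine Finset.sum_pos' (fun i _ => mul_nonneg (ha i).le (Complex.normSq_nonneg _)) ?_
    exact ⟨i0, Finset.mem_univ _, mul_pos (ha i0) (by simpa using Complex.normSq_pos.mpr hi0)⟩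
  have him : μ.im = 0 := by
    have h2 := congrArg Complex.im hbig
    have hμ2 : μ ^ 2 = ((-(μ.im ^ 2) : ℝ) : ℂ) := by
      have : μ = (μ.im : ℝ) * Complex.I := by
        apply Complex.ext <;> simp [hre]
      rw [this]; push_cast; ring_nf; simp [Complex.I_sq]
    rw [hμ2] at h2
    simp [Complex.add_im, Complex.mul_im, hre, ← Complex.ofReal_pow] at h2
    exact h2.resolve_right hn1.ne'
  have hμ0 : μ = 0 := Complex.ext hre him
  refine ⟨hμ0, ?_⟩
  -- kernel argument
  have hLc0 : ∀ i, p i = 0 ∧ q i = 0 := by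
    intro i
    have := heq i
    rw [hμ0, hmv i] at this
    simp only [ne_eq, zero_pow, zero_mul, mul_zero, add_zero, zero_add] at this
    have h2 := this
    constructor
    · have := congrArg Complex.re h2; simpa using this
    · have := congrArg Complex.im h2; simpa using this
  have hpx : L *ᵥ x = 0 := by funext i; exact (hLc0 i).1
  have hqy : L *ᵥ y = 0 := by funext i; exact (hLc0 i).2
  obtain ⟨c, hc⟩ := hker x hpx
  obtain ⟨d, hd⟩ := hker y hqy
  refine ⟨(c : ℂ) + (d : ℂ) * Complex.I, funext fun i => ?_⟩
  rw [hw' i, congrFun hc i, congrFun hd i]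
end

section
/- Let L be a real symmetric N×N matrix with orthonormal eigenvectors v^[0],…,v^[N−1] and eigenvalues λ^[0],…,λ^[N−1], where λ^[0] = 0 and v^[0] = (1/√N)(1,…,1). Fix α > 0, ω > 0, k, i. Then the imaginary part of R_i^(k)(ω) = Σ_ℓ v_k^[ℓ] v_i^[ℓ] / (−ω² + iαω + λ^[ℓ]) satisfies ω·Im[R_i^(k)(ω)] → −1/(Nα) as ω → 0⁺, provided λ^[ℓ] > 0 for ℓ ≥ 1. -/
open Matrix Complex Filter

theorem low_frequency_imaginary_response
    (N : ℕ) [NeZero N] (L : Matrix (Fin N) (Fin N) ℝ) (hLsymm : L.IsSymm)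
    (lam : Fin N → ℝ) (v : Fin N → Fin N → ℝ)
    (heig : ∀ ℓ, L *ᵥ v ℓ = lam ℓ • v ℓ)
    (horth : ∀ ℓ ℓ', ∑ j, v ℓ j * v ℓ' j = if ℓ = ℓ' then 1 else 0)
    (hlam0 : lam 0 = 0) (hv0 : v 0 = fun _ => 1 / Real.sqrt N)
    (hpos : ∀ ℓ, ℓ ≠ 0 → 0 < lam ℓ)
    (α : ℝ) (hα : 0 < α) (k i : Fin N) :
    Tendsto
      (fun ω : ℝ => ω *
        (∑ ℓ, ((v ℓ k : ℂ) * (v ℓ i : ℂ)) /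
          (-(ω : ℂ) ^ 2 + I * (α : ℂ) * (ω : ℂ) + (lam ℓ : ℂ))).im)
      (nhdsWithin 0 (Set.Ioi 0)) (nhds (-1 / (N * α))) := by
  have hN : (0:ℝ) < N := Nat.cast_pos.mpr (Nat.pos_of_ne_zero (NeZero.ne N))
  have hsum : (fun ω : ℝ => ω *
        (∑ ℓ, ((v ℓ k : ℂ) * (v ℓ i : ℂ)) /
          (-(ω : ℂ) ^ 2 + I * (α : ℂ) * (ω : ℂ) + (lam ℓ : ℂ))).im)
      = fun ω : ℝ => ∑ ℓ, ω * (((v ℓ k : ℂ) * (v ℓ i : ℂ)) /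
          (-(ω : ℂ) ^ 2 + I * (α : ℂ) * (ω : ℂ) + (lam ℓ : ℂ))).im := by
    funext ω
    rw [Complex.im_sum, Finset.mul_sum]
  rw [hsum]
  have hconst : (-1 / (N * α) : ℝ)
      = ∑ ℓ : Fin N, (if ℓ = 0 then -1 / (N * α) else 0) := by
    simp
  rw [hconst]
  apply tendsto_finset_sum
  intro ℓ _
  by_cases hℓ : ℓ = 0
  · subst hℓ
    simp only [if_pos rfl]
    have hc : (v 0 k : ℂ) * (v 0 i : ℂ) = 1 / (N : ℂ) := by
      rw [hv0]
      have h1 : (1 / Real.sqrt N) * (1 / Real.sqrt N) = 1 / (N : ℝ) := by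
        rw [div_mul_div_comm, one_mul, Real.mul_self_sqrt hN.le]
      rw [show ((1 / Real.sqrt N : ℝ):ℂ) * ((1 / Real.sqrt N : ℝ):ℂ)
        = (((1 / Real.sqrt N) * (1 / Real.sqrt N) : ℝ) : ℂ) from (Complex.ofReal_mul _ _).symm,
        h1]
      push_cast
      ring
    have heq : ∀ ω ∈ Set.Ioi (0:ℝ),
        ω * (((v 0 k : ℂ) * (v 0 i : ℂ)) /
          (-(ω : ℂ) ^ 2 + I * (α : ℂ) * (ω : ℂ) + (lam 0 : ℂ))).im
        = (((1:ℂ) / N) / (-(ω : ℂ) + I * α)).im := by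
      intro ω hω
      have hω0 : (ω : ℂ) ≠ 0 := by
        exact_mod_cast (ne_of_gt (Set.mem_Ioi.mp hω))
      have hz : (-(ω : ℂ) + I * α) ≠ 0 := by
        intro h
        have := congrArg Complex.im h
        simp at this
        exact hα.ne' this
      have hden : (-(ω : ℂ) ^ 2 + I * (α : ℂ) * (ω : ℂ) + (lam 0 : ℂ))
          = (ω : ℂ) * (-(ω : ℂ) + I * α) := by
        rw [hlam0]; push_cast; ring
      rw [hc, hden, ← Complex.im_ofReal_mul]
      congr 1
      rw [mul_div_assoc', mul_div_mul_left _ _ hω0]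
    rw [tendsto_congr' (Filter.eventuallyEq_of_mem self_mem_nhdsWithin heq)]
    have hval : (((1:ℂ) / N) / (-(0 : ℂ) + I * α)).im = -1 / (N * α) := by
      have : (-(0 : ℂ) + I * α) = I * α := by ring
      rw [this]
      rw [Complex.div_im]
      simp [Complex.normSq, Complex.div_re, Complex.div_im]
      field_simp
    rw [← hval]
    apply Tendsto.mono_left _ nhdsWithin_le_nhds
    apply ContinuousAt.tendsto
    apply Complex.continuous_im.continuousAt.comp
    apply ContinuousAt.div
    · fun_prop
    · fun_prop
    · simp [Complex.ext_iff, hα.ne']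
  · simp only [if_neg hℓ]
    have hne : (-(((0:ℝ)) : ℂ) ^ 2 + I * (α : ℂ) * ((0:ℝ) : ℂ) + (lam ℓ : ℂ)) ≠ 0 := by
      have : 0 < lam ℓ := hpos ℓ hℓ
      simp [Complex.ext_iff, this.ne']
    have hcont : ContinuousAt (fun ω : ℝ => ω * (((v ℓ k : ℂ) * (v ℓ i : ℂ)) /
          (-(ω : ℂ) ^ 2 + I * (α : ℂ) * (ω : ℂ) + (lam ℓ : ℂ))).im) 0 := by
      apply ContinuousAt.mul continuousAt_id
      apply Complex.continuous_im.continuousAt.comp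
      apply ContinuousAt.div
      · fun_prop
      · fun_prop
      · exact hne
    have := hcont.tendsto.mono_left (nhdsWithin_le_nhds (s := Set.Ioi (0:ℝ)))
    simpa using this
end

section
/- Fix N ≥ 1, α > 0, and reals 0 = λ^[0] < λ^[1] < … < λ^[N−1]. For each ℓ define Q^[ℓ](ω) = Π_{ℓ'≠ℓ} [(−ω² + λ^[ℓ'])² + α²ω²]. Then there exist polynomials C^[0], …, C^[2N−2] with real coefficients, each C^[j] of degree exactly j and independent of ℓ, such that Q^[ℓ](ω) = Σ_{j=0}^{2N−2} C^[j](λ^[ℓ]) ω^{4N−4−2j} for all ω and all ℓ. -/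
open Polynomial Finset

noncomputable def fpoly (α l : ℝ) : Polynomial ℝ :=
  X ^ 2 + C (α ^ 2 - 2 * l) * X + C (l ^ 2)

noncomputable def Dpoly (α : ℝ) (p : ℕ → ℝ) (n : ℕ) : ℕ → Polynomial ℝ
  | 0 => 1
  | 1 => C (p (n - 1)) - (C (α ^ 2) - 2 * X)
  | (j + 2) => C (p (n - (j + 2))) - (C (α ^ 2) - 2 * X) * Dpoly α p n (j + 1)
      - X ^ 2 * Dpoly α p n j

lemma fpoly_monic (α l : ℝ) : (fpoly α l).Monic := by
  unfold fpoly
  monicity!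

lemma fpoly_natDegree (α l : ℝ) : (fpoly α l).natDegree = 2 := by
  have h : fpoly α l = C 1 * X ^ 2 + C (α ^ 2 - 2 * l) * X + C (l ^ 2) := by
    simp [fpoly]
  rw [h]
  exact natDegree_quadratic one_ne_zero

lemma bhat_natDegree_le (α : ℝ) : (C (α ^ 2) - 2 * X : Polynomial ℝ).natDegree ≤ 1 := by
  apply le_trans (natDegree_sub_le _ _)
  apply max_le (by simp)
  exact le_trans natDegree_mul_le (by simp)

lemma Dpoly_natDegree_le (α : ℝ) (p : ℕ → ℝ) (n : ℕ) :
    ∀ j, (Dpoly α p n j).natDegree ≤ j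
  | 0 => by simp [Dpoly]
  | 1 => by
    simp only [Dpoly]
    exact le_trans (natDegree_sub_le _ _) (max_le (by simp) (bhat_natDegree_le α))
  | (j + 2) => by
    have h1 := Dpoly_natDegree_le α p n (j + 1)
    have h0 := Dpoly_natDegree_le α p n j
    have hb := bhat_natDegree_le α
    simp only [Dpoly]
    apply le_trans (natDegree_sub_le _ _)
    apply max_le
    · apply le_trans (natDegree_sub_le _ _)
      apply max_le (by simp)
      apply le_trans natDegree_mul_le
      omega
    · apply le_trans natDegree_mul_le
      rw [natDegree_X_pow]
      omega

lemma Dpoly_coeff (α : ℝ) (p : ℕ → ℝ) (n : ℕ) :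
    ∀ j, (Dpoly α p n j).coeff j = (j : ℝ) + 1
  | 0 => by simp [Dpoly]
  | 1 => by
    have h2 : (2 : Polynomial ℝ) * X = C 2 * X := by
      rw [map_ofNat]
    simp only [Dpoly, coeff_sub, coeff_C, h2, coeff_C_mul, coeff_X]
    norm_num
  | (j + 2) => by
    have h1 := Dpoly_coeff α p n (j + 1)
    have h0 := Dpoly_coeff α p n j
    have hz1 : (Dpoly α p n (j + 1)).coeff (j + 2) = 0 :=
      coeff_eq_zero_of_natDegree_lt
        (lt_of_le_of_lt (Dpoly_natDegree_le α p n (j + 1)) (by omega))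
    have h2 : (2 : Polynomial ℝ) * X = C 2 * X := by
      rw [map_ofNat]
    have hx : (X * Dpoly α p n (j + 1)).coeff (j + 2)
        = (Dpoly α p n (j + 1)).coeff (j + 1) := by
      rw [show j + 2 = j + 1 + 1 by omega, coeff_X_mul]
    have hb : ((C (α ^ 2) - 2 * X) * Dpoly α p n (j + 1)).coeff (j + 2)
        = α ^ 2 * (Dpoly α p n (j + 1)).coeff (j + 2)
          - 2 * (Dpoly α p n (j + 1)).coeff (j + 1) := by
      rw [sub_mul, coeff_sub, coeff_C_mul, h2, mul_assoc, coeff_C_mul, hx]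
    have hX : (X ^ 2 * Dpoly α p n j).coeff (j + 2) = (Dpoly α p n j).coeff j :=
      coeff_X_pow_mul _ _ _
    simp only [Dpoly, coeff_sub, hb, hX, coeff_C, hz1, h1, h0]
    push_cast
    norm_num
    ring

theorem product_over_other_modes_polynomial_structure
    (N : ℕ) [NeZero N] (α : ℝ) (hα : 0 < α)
    (lam : Fin N → ℝ) (hmono : StrictMono lam) (hlam0 : lam 0 = 0) :
    ∃ C : ℕ → Polynomial ℝ,
      (∀ j ≤ 2 * N - 2, (C j).natDegree = j) ∧
      ∀ (ℓ : Fin N) (ω : ℝ),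
        (∏ ℓ' ∈ Finset.univ.erase ℓ, ((-ω ^ 2 + lam ℓ') ^ 2 + α ^ 2 * ω ^ 2))
          = ∑ j ∈ Finset.range (2 * N - 1), (C j).eval (lam ℓ) * ω ^ (4 * N - 4 - 2 * j) := by
  classical
  have hN : 1 ≤ N := Nat.one_le_iff_ne_zero.mpr (NeZero.ne N)
  set P : Polynomial ℝ := ∏ ℓ', fpoly α (lam ℓ') with hP
  refine ⟨Dpoly α P.coeff (2 * N), fun j _ => ?_, fun ℓ ω => ?_⟩
  · have hle := Dpoly_natDegree_le α P.coeff (2 * N) j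
    have hc := Dpoly_coeff α P.coeff (2 * N) j
    have hne : (Dpoly α P.coeff (2 * N) j).coeff j ≠ 0 := by rw [hc]; positivity
    exact le_antisymm hle (le_natDegree_of_ne_zero hne)
  · set Q : Polynomial ℝ := ∏ ℓ' ∈ univ.erase ℓ, fpoly α (lam ℓ') with hQ
    have hPQ : P = fpoly α (lam ℓ) * Q := by
      rw [hP, hQ]
      exact (mul_prod_erase _ _ (mem_univ ℓ)).symm
    have hQmonic : Q.Monic := monic_prod_of_monic _ _ fun _ _ => fpoly_monic α _
    have hQdeg : Q.natDegree = 2 * N - 2 := by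
      rw [hQ, natDegree_prod_of_monic _ _ fun _ _ => fpoly_monic α _]
      simp only [fpoly_natDegree, sum_const, smul_eq_mul]
      rw [card_erase_of_mem (mem_univ ℓ), card_univ, Fintype.card_fin]
      omega
    set lm := lam ℓ with hlm
    have htop : Q.coeff (2 * N - 2) = 1 := by
      rw [← hQdeg]; exact hQmonic.coeff_natDegree
    have hrel : ∀ m, P.coeff (m + 2)
        = Q.coeff m + (α ^ 2 - 2 * lm) * Q.coeff (m + 1) + lm ^ 2 * Q.coeff (m + 2) := by
      intro m
      have hx : (X * Q).coeff (m + 2) = Q.coeff (m + 1) := by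
        rw [show m + 2 = m + 1 + 1 by omega, coeff_X_mul]
      rw [hPQ]
      unfold fpoly
      rw [add_mul, add_mul, coeff_add, coeff_add, coeff_X_pow_mul, mul_assoc, coeff_C_mul,
        coeff_C_mul, hx]
    have key : ∀ j, j ≤ 2 * N - 2 → Q.coeff (2 * N - 2 - j)
        = (Dpoly α P.coeff (2 * N) j).eval lm := by
      intro j
      induction j using Nat.strong_induction_on with
      | _ j ih =>
        match j, ih with
        | 0, _ =>
          intro _
          simp only [Nat.sub_zero, Dpoly, eval_one, htop]
        | 1, _ =>
          intro hj
          have hr := hrel (2 * N - 3)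
          rw [show 2 * N - 3 + 2 = 2 * N - 1 by omega,
            show 2 * N - 3 + 1 = 2 * N - 2 by omega] at hr
          have hz : Q.coeff (2 * N - 1) = 0 :=
            coeff_eq_zero_of_natDegree_lt (by omega)
          rw [hz, htop] at hr
          rw [show 2 * N - 2 - 1 = 2 * N - 3 by omega]
          simp only [Dpoly, eval_sub, eval_C, eval_mul, eval_ofNat, eval_X]
          linear_combination -hr
        | (j + 2), ih =>
          intro hj
          have e1 := ih (j + 1) (by omega) (by omega)
          have e0 := ih j (by omega) (by omega)
          have hr := hrel (2 * N - 4 - j)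
          rw [show 2 * N - 4 - j + 2 = 2 * N - 2 - j by omega,
            show 2 * N - 4 - j + 1 = 2 * N - 2 - (j + 1) by omega] at hr
          rw [show 2 * N - 2 - (j + 2) = 2 * N - 4 - j by omega]
          simp only [Dpoly, eval_sub, eval_mul, eval_C, eval_ofNat, eval_X, eval_pow]
          rw [show 2 * N - (j + 2) = 2 * N - 2 - j by omega]
          rw [← e1, ← e0]
          linear_combination -hr
    have hev : ∀ ℓ' : Fin N, (fpoly α (lam ℓ')).eval (ω ^ 2)
        = (-ω ^ 2 + lam ℓ') ^ 2 + α ^ 2 * ω ^ 2 := by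
      intro ℓ'
      simp [fpoly]
      ring
    calc (∏ ℓ' ∈ univ.erase ℓ, ((-ω ^ 2 + lam ℓ') ^ 2 + α ^ 2 * ω ^ 2))
        = Q.eval (ω ^ 2) := by
          rw [hQ, eval_prod]
          exact prod_congr rfl fun ℓ' _ => (hev ℓ').symm
      _ = ∑ i ∈ range (2 * N - 1), Q.coeff i * (ω ^ 2) ^ i :=
          eval_eq_sum_range' (by rw [hQdeg]; omega) _
      _ = ∑ j ∈ range (2 * N - 1), Q.coeff (2 * N - 2 - j) * (ω ^ 2) ^ (2 * N - 2 - j) := by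
          rw [← Finset.sum_range_reflect
            (fun j => Q.coeff (2 * N - 2 - j) * (ω ^ 2) ^ (2 * N - 2 - j)) (2 * N - 1)]
          apply sum_congr rfl
          intro i hi
          rw [mem_range] at hi
          rw [show 2 * N - 2 - (2 * N - 1 - 1 - i) = i by omega]
      _ = ∑ j ∈ range (2 * N - 1),
            (Dpoly α P.coeff (2 * N) j).eval lm * ω ^ (4 * N - 4 - 2 * j) := by
          apply sum_congr rfl
          intro j hj
          rw [mem_range] at hj
          rw [key j (by omega), ← pow_mul, show 2 * (2 * N - 2 - j) = 4 * N - 4 - 2 * j by omega]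
end

section
/- Let α, ω > 0 and λ > 0 with α² < 4λ; set η = √(α²/4 − λ) = i√(λ − α²/4), Δ_± = −α/2 ± η, and define f_n(λ) = ((Δ₊)ⁿ − (Δ₋)ⁿ)/(2η) for n ≥ 2. Then f_n(λ) is a polynomial in λ whose leading term is (−λ)^{(n−1)/2} when n is odd and (−1)^{n/2}(n/2)α·λ^{(n−2)/2} when n is even. -/
open Complex

/-!
With `a = -α/2 + η` and `b = -α/2 - η` we have `a + b = -α`, `a * b = λ` and `a - b = 2η`, so
`f_n = (aⁿ - bⁿ)/(a - b)` is the Lucas sequence `U_n(a + b, a b)`. Its recurrence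
`U_{n+2} = (a + b) U_{n+1} - a b U_n` exhibits it as a polynomial in `Q = a b` with coefficients
in `ℤ[P]`, `P = a + b`; following the top coefficient through the recurrence, two steps at a
time, gives the leading terms `(-1)ᵏ Qᵏ` of `U_{2k+1}` and `(-1)ᵏ (k+1) P Qᵏ` of `U_{2k+2}`.
-/

namespace Polynomial

variable {R S : Type*} [CommRing R] [CommRing S]

/-- The Lucas sequence `U_n(P, Q)` as a polynomial in `Q = X`. -/
noncomputable def lucasU (P : R) : ℕ → R[X]
  | 0 => 0
  | 1 => 1
  | n + 2 => C P * lucasU P (n + 1) - X * lucasU P n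

@[simp] lemma lucasU_zero (P : R) : lucasU P 0 = 0 := rfl

@[simp] lemma lucasU_one (P : R) : lucasU P 1 = 1 := rfl

lemma lucasU_add_two (P : R) (n : ℕ) :
    lucasU P (n + 2) = C P * lucasU P (n + 1) - X * lucasU P n := rfl

lemma map_lucasU (f : R →+* S) (P : R) (n : ℕ) : (lucasU P n).map f = lucasU (f P) n := by
  induction n using Nat.twoStepInduction with
  | zero => simp
  | one => simp
  | more n ih0 ih1 => simp [lucasU_add_two, ih0, ih1]

lemma sub_mul_eval_lucasU (a b : R) (n : ℕ) :
    (a - b) * (lucasU (a + b) n).eval (a * b) = a ^ n - b ^ n := by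
  induction n using Nat.twoStepInduction with
  | zero => simp
  | one => simp
  | more n ih0 ih1 =>
    simp only [lucasU_add_two, eval_sub, eval_mul, eval_C, eval_X]
    linear_combination (a + b) * ih1 - a * b * ih0

lemma natDegree_lucasU_add_two_le {P : R} {n d : ℕ} (h₁ : (lucasU P (n + 1)).natDegree ≤ d)
    (h₀ : (lucasU P n).natDegree + 1 ≤ d) : (lucasU P (n + 2)).natDegree ≤ d := by
  rw [lucasU_add_two]
  refine (natDegree_sub_le _ _).trans <|
    max_le ((natDegree_C_mul_le _ _).trans h₁) (natDegree_mul_le.trans ?_)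
  have := natDegree_X_le (R := R)
  omega

lemma coeff_lucasU_add_two (P : R) (n k : ℕ) :
    (lucasU P (n + 2)).coeff (k + 1) =
      P * (lucasU P (n + 1)).coeff (k + 1) - (lucasU P n).coeff k := by
  rw [lucasU_add_two, coeff_sub, coeff_C_mul, coeff_X_mul]

lemma natDegree_lucasU_le (P : R) (k : ℕ) :
    (lucasU P (2 * k + 1)).natDegree ≤ k ∧ (lucasU P (2 * k + 2)).natDegree ≤ k := by
  induction k with
  | zero =>
    refine ⟨by simp, ?_⟩
    rw [lucasU_add_two]
    simp
  | succ k ih =>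
    have hodd : (lucasU P (2 * k + 1 + 2)).natDegree ≤ k + 1 :=
      natDegree_lucasU_add_two_le (ih.2.trans k.le_succ) (by omega)
    have heven : (lucasU P (2 * k + 2 + 2)).natDegree ≤ k + 1 :=
      natDegree_lucasU_add_two_le hodd (by omega)
    rw [show 2 * (k + 1) + 1 = 2 * k + 1 + 2 by ring, show 2 * (k + 1) + 2 = 2 * k + 2 + 2 by ring]
    exact ⟨hodd, heven⟩

lemma coeff_lucasU (P : R) (k : ℕ) :
    (lucasU P (2 * k + 1)).coeff k = (-1) ^ k ∧
      (lucasU P (2 * k + 2)).coeff k = (-1) ^ k * (k + 1) * P := by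
  induction k with
  | zero => simp [lucasU_add_two]
  | succ k ih =>
    have hodd : (lucasU P (2 * k + 1 + 2)).coeff (k + 1) = (-1) ^ (k + 1) := by
      rw [coeff_lucasU_add_two, coeff_eq_zero_of_natDegree_lt
        ((natDegree_lucasU_le P k).2.trans_lt k.lt_succ_self), ih.1]
      ring
    have heven : (lucasU P (2 * k + 2 + 2)).coeff (k + 1) = (-1) ^ (k + 1) * (k + 1 + 1) * P := by
      rw [coeff_lucasU_add_two, hodd, ih.2]
      ring
    rw [show 2 * (k + 1) + 1 = 2 * k + 1 + 2 by ring, show 2 * (k + 1) + 2 = 2 * k + 2 + 2 by ring]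
    exact ⟨hodd, by push_cast; exact heven⟩

lemma natDegree_lucasU_odd [Nontrivial R] (P : R) (k : ℕ) :
    (lucasU P (2 * k + 1)).natDegree = k :=
  natDegree_eq_of_le_of_coeff_ne_zero (natDegree_lucasU_le P k).1
    (by rw [(coeff_lucasU P k).1]; exact (isUnit_neg_one.pow k).ne_zero)

lemma leadingCoeff_lucasU_odd [Nontrivial R] (P : R) (k : ℕ) :
    (lucasU P (2 * k + 1)).leadingCoeff = (-1) ^ k := by
  rw [leadingCoeff, natDegree_lucasU_odd, (coeff_lucasU P k).1]

variable [NoZeroDivisors R] [CharZero R]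

lemma natDegree_lucasU_even {P : R} (hP : P ≠ 0) (k : ℕ) :
    (lucasU P (2 * k + 2)).natDegree = k :=
  natDegree_eq_of_le_of_coeff_ne_zero (natDegree_lucasU_le P k).2
    (by rw [(coeff_lucasU P k).2]; exact mul_ne_zero (by simp [Nat.cast_add_one_ne_zero]) hP)

lemma leadingCoeff_lucasU_even {P : R} (hP : P ≠ 0) (k : ℕ) :
    (lucasU P (2 * k + 2)).leadingCoeff = (-1) ^ k * (k + 1) * P := by
  rw [leadingCoeff, natDegree_lucasU_even hP, (coeff_lucasU P k).2]

end Polynomial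

open Polynomial in
theorem fn_leading_term_general
    (α : ℝ) (hα : 0 < α) (n : ℕ) :
    ∃ p : Polynomial ℝ,
      (∀ lam : ℝ, 0 < lam → α ^ 2 < 4 * lam →
        ∀ η : ℂ, η ≠ 0 → η ^ 2 = ((α ^ 2 / 4 - lam : ℝ) : ℂ) →
          ((-(α : ℂ) / 2 + η) ^ n - (-(α : ℂ) / 2 - η) ^ n) / (2 * η)
            = ((p.eval lam : ℝ) : ℂ)) ∧
      (Odd n → p.natDegree = (n - 1) / 2 ∧ p.leadingCoeff = (-1 : ℝ) ^ ((n - 1) / 2)) ∧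
      (Even n → p.natDegree = (n - 2) / 2 ∧
        p.leadingCoeff = (-1 : ℝ) ^ (n / 2) * (n / 2 : ℕ) * α) := by
  refine ⟨lucasU (-α) n, ?_, ?_, ?_⟩
  · intro lam _ _ η hη hη2
    have hsum : (-(α : ℂ) / 2 + η) + (-(α : ℂ) / 2 - η) = ofRealHom (-α) := by simp
    have hprod : (-(α : ℂ) / 2 + η) * (-(α : ℂ) / 2 - η) = ofRealHom lam := by
      push_cast at hη2; linear_combination -hη2
    rw [← sub_mul_eval_lucasU, hsum, hprod, ← map_lucasU, eval_map, eval₂_at_apply,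
      ofRealHom_eq_coe]
    field_simp
    ring
  · rintro ⟨k, rfl⟩
    simp [natDegree_lucasU_odd, leadingCoeff_lucasU_odd]
  · rintro ⟨m, rfl⟩
    obtain _ | k := m
    · simp
    have hn : k + 1 + (k + 1) = 2 * k + 2 := by ring
    rw [hn, natDegree_lucasU_even (neg_ne_zero.2 hα.ne'),
      leadingCoeff_lucasU_even (neg_ne_zero.2 hα.ne')]
    refine ⟨by omega, ?_⟩
    rw [show (2 * k + 2) / 2 = k + 1 by omega]
    push_cast
    ring

theorem fn_leading_term
    (α ω : ℝ) (hα : 0 < α) (hω : 0 < ω) (n : ℕ) (hn : 2 ≤ n) :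
    ∃ p : Polynomial ℝ,
      (∀ lam : ℝ, 0 < lam → α ^ 2 < 4 * lam →
        ∀ η : ℂ, η ≠ 0 → η ^ 2 = ((α ^ 2 / 4 - lam : ℝ) : ℂ) →
          ((-(α : ℂ) / 2 + η) ^ n - (-(α : ℂ) / 2 - η) ^ n) / (2 * η)
            = ((p.eval lam : ℝ) : ℂ)) ∧
      (Odd n → p.natDegree = (n - 1) / 2 ∧ p.leadingCoeff = (-1 : ℝ) ^ ((n - 1) / 2)) ∧
      (Even n → p.natDegree = (n - 2) / 2 ∧
        p.leadingCoeff = (-1 : ℝ) ^ (n / 2) * (n / 2 : ℕ) * α) :=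
  fn_leading_term_general α hα n
end

section
/- Let α, ω > 0, λ > 0, α² < 4λ, and F_n(λ) as above with n ≥ 2. Then F_n, viewed as a polynomial in λ, has leading term (−1)^{(n−1)/2}(−iω + ((n−1)/2)α)·λ^{(n−3)/2} if n is odd, and (−λ)^{(n−2)/2} if n is even; in particular deg F_n = ⌊(n−2)/2⌋. -/
/-!
With `A, B = -α/2 ± η` the roots of `μ² + αμ + λ`, the numerator of `F_n` is `μⁿ - rₙ(μ)` at
`μ = iω`, where `rₙ(μ) = fₙ μ - λ fₙ₋₁` is the remainder of `μⁿ` modulo `μ² + αμ + λ`. So `F_n` is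
the quotient evaluated at `iω`: it satisfies `F₀ = F₁ = 0` and
`F_{n+2} = -α F_{n+1} - λ F_n + (iω)ⁿ`, which makes it a polynomial in `λ`. Along this recurrence
the degree goes up by one every second step, through the term `-λ F_n`, and induction over the
pairs `(2k+2, 2k+3)` gives the degree and the leading coefficients.
-/

open Complex Polynomial

theorem Polynomial.natDegree_eq_and_leadingCoeff_eq_coeff {R : Type*} [Semiring R] {p : R[X]}
    {k : ℕ} (hle : p.natDegree ≤ k) (hk : p.coeff k ≠ 0) :
    p.natDegree = k ∧ p.leadingCoeff = p.coeff k := by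
  have hdeg : p.natDegree = k := natDegree_eq_of_le_of_coeff_ne_zero hle hk
  exact ⟨hdeg, by rw [leadingCoeff, hdeg]⟩

/-- `Fpoly α (I * ω) n` is the paper's `F_n`, as a polynomial in `λ`. -/
noncomputable def Fpoly {R : Type*} [CommRing R] (a c : R) : ℕ → R[X]
  | 0 => 0
  | 1 => 0
  | n + 2 => -C a * Fpoly a c (n + 1) - X * Fpoly a c n + C (c ^ n)

namespace Fpoly

variable {R : Type*} [CommRing R] (a c : R)

theorem eval_mul_mul_sub (A B : R) (hsum : A + B = -a) :
    ∀ n, (Fpoly a c n).eval (A * B) * (c ^ 2 + a * c + A * B) * (A - B) =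
      A ^ n * (B - c) - B ^ n * (A - c) + (A - B) * c ^ n
  | 0 => by simp only [Fpoly, eval_zero]; ring
  | 1 => by simp only [Fpoly, eval_zero]; ring
  | n + 2 => by
    have ih₀ := eval_mul_mul_sub A B hsum n
    have ih₁ := eval_mul_mul_sub A B hsum (n + 1)
    simp only [Fpoly, eval_add, eval_sub, eval_mul, eval_neg, eval_C, eval_X]
    linear_combination (-a) * ih₁ - (A * B) * ih₀ + (c ^ (n + 1) * (A - B)
      - (A ^ (n + 1) * (B - c) - B ^ (n + 1) * (A - c) + (A - B) * c ^ (n + 1))) * hsum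

theorem natDegree_add_two_le {n m : ℕ} (h₁ : (Fpoly a c (n + 1)).natDegree ≤ m + 1)
    (h₀ : (Fpoly a c n).natDegree ≤ m) : (Fpoly a c (n + 2)).natDegree ≤ m + 1 := by
  refine natDegree_add_le_of_degree_le ((natDegree_sub_le _ _).trans (max_le ?_ ?_))
    ((natDegree_C _).trans_le m.succ.zero_le)
  · exact natDegree_mul_le.trans (by simpa using h₁)
  · exact natDegree_mul_le.trans (by grw [natDegree_X_le, h₀]; omega)

theorem coeff_add_two_succ (n j : ℕ) :
    (Fpoly a c (n + 2)).coeff (j + 1) =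
      -a * (Fpoly a c (n + 1)).coeff (j + 1) - (Fpoly a c n).coeff j := by
  simp only [Fpoly, coeff_add, coeff_sub, neg_mul, coeff_neg, coeff_C_mul, coeff_X_mul,
    coeff_C_succ, add_zero]

theorem natDegree_le_pair (k : ℕ) :
    (Fpoly a c (2 * k + 2)).natDegree ≤ k ∧ (Fpoly a c (2 * k + 3)).natDegree ≤ k := by
  induction k with
  | zero => simp [Fpoly]
  | succ k ih =>
    have h₀ : (Fpoly a c (2 * k + 4)).natDegree ≤ k + 1 :=
      natDegree_add_two_le a c (ih.2.trans k.le_succ) ih.1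
    exact ⟨h₀, natDegree_add_two_le a c h₀ ih.2⟩

theorem coeff_pair (k : ℕ) :
    (Fpoly a c (2 * k + 2)).coeff k = (-1) ^ k ∧
      (Fpoly a c (2 * k + 3)).coeff k = (-1) ^ (k + 1) * (-c + ((k + 1 : ℕ) : R) * a) := by
  induction k with
  | zero => simp [Fpoly]
  | succ k ih =>
    have h₀ : (Fpoly a c (2 * k + 4)).coeff (k + 1) = (-1) ^ (k + 1) := by
      rw [coeff_add_two_succ, ih.1,
        coeff_eq_zero_of_natDegree_lt ((natDegree_le_pair a c k).2.trans_lt k.lt_succ_self)]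
      ring
    refine ⟨h₀, ?_⟩
    rw [show 2 * (k + 1) + 3 = 2 * k + 3 + 2 by ring, coeff_add_two_succ, h₀, ih.2]
    push_cast
    ring

theorem natDegree_leadingCoeff_of_even [Nontrivial R] {n : ℕ} (hn : Even n) (h2 : 2 ≤ n) :
    (Fpoly a c n).natDegree = (n - 2) / 2 ∧ (Fpoly a c n).leadingCoeff = (-1) ^ ((n - 2) / 2) := by
  obtain ⟨k, rfl⟩ : ∃ k, n = 2 * k + 2 := ⟨(n - 2) / 2, by grind⟩
  rw [show (2 * k + 2 - 2) / 2 = k by omega, ← (coeff_pair a c k).1]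
  exact natDegree_eq_and_leadingCoeff_eq_coeff (natDegree_le_pair a c k).1
    (by rw [(coeff_pair a c k).1]; exact (isUnit_neg_one.pow k).ne_zero)

theorem natDegree_leadingCoeff_of_odd {n : ℕ} (hn : Odd n) (h3 : 3 ≤ n)
    (hc : -c + (((n - 1) / 2 : ℕ) : R) * a ≠ 0) :
    (Fpoly a c n).natDegree = (n - 3) / 2 ∧
      (Fpoly a c n).leadingCoeff = (-1) ^ ((n - 1) / 2) * (-c + (((n - 1) / 2 : ℕ) : R) * a) := by
  obtain ⟨k, rfl⟩ : ∃ k, n = 2 * k + 3 := ⟨(n - 3) / 2, by grind⟩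
  rw [show (2 * k + 3 - 3) / 2 = k by omega, show (2 * k + 3 - 1) / 2 = k + 1 by omega] at *
  rw [← (coeff_pair a c k).2]
  exact natDegree_eq_and_leadingCoeff_eq_coeff (natDegree_le_pair a c k).2
    (by simpa [(coeff_pair a c k).2] using hc)

end Fpoly

theorem Fn_leading_term
    (α ω : ℝ) (hα : 0 < α) (hω : 0 < ω) (n : ℕ) (hn : 2 ≤ n) :
    ∃ p : Polynomial ℂ,
      (∀ lam : ℝ, 0 < lam → α ^ 2 < 4 * lam →
        ∀ η : ℂ, η ≠ 0 → η ^ 2 = ((α ^ 2 / 4 - lam : ℝ) : ℂ) →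
          (((-(α : ℂ) / 2 + η) ^ n * ((-(α : ℂ) / 2 - η) - I * (ω : ℂ))
              - (-(α : ℂ) / 2 - η) ^ n * ((-(α : ℂ) / 2 + η) - I * (ω : ℂ))) / (2 * η)
            + (I * (ω : ℂ)) ^ n) / (-(ω : ℂ) ^ 2 + I * (α : ℂ) * (ω : ℂ) + (lam : ℂ))
            = p.eval ((lam : ℂ))) ∧
      (Odd n → p.natDegree = (n - 3) / 2 ∧
        p.leadingCoeff = (-1 : ℂ) ^ ((n - 1) / 2) * (-(I * (ω : ℂ)) + (((n - 1) / 2 : ℕ) : ℂ) * (α : ℂ))) ∧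
      (Even n → p.natDegree = (n - 2) / 2 ∧ p.leadingCoeff = (-1 : ℂ) ^ ((n - 2) / 2)) ∧
      p.natDegree = (n - 2) / 2 := by
  have hodd (hodd : Odd n) := Fpoly.natDegree_leadingCoeff_of_odd (α : ℂ) (I * ω) hodd
    (by grind) fun h => by simpa [hω.ne'] using congrArg im h
  have heven (heven : Even n) := Fpoly.natDegree_leadingCoeff_of_even (α : ℂ) (I * ω) heven hn
  refine ⟨Fpoly α (I * ω) n, fun lam _ _ η hη₀ hη => ?_, hodd, heven, ?_⟩
  · have hD : -(ω : ℂ) ^ 2 + I * α * ω + lam ≠ 0 := fun h => by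
      simpa [← ofReal_pow, hα.ne', hω.ne'] using congrArg im h
    have key := Fpoly.eval_mul_mul_sub (α : ℂ) (I * ω) (-α / 2 + η) (-α / 2 - η) (by ring) n
    rw [show (-(α : ℂ) / 2 + η) * (-α / 2 - η) = lam by push_cast at hη; linear_combination -hη] at key
    have h2η : 2 * η ≠ 0 := mul_ne_zero two_ne_zero hη₀
    rw [div_eq_iff hD, div_add' _ _ _ h2η, div_eq_iff h2η]
    linear_combination -key + 2 * η * ω ^ 2 * (Fpoly (α : ℂ) (I * ω) n).eval (lam : ℂ) * I_sq
  · rcases Nat.even_or_odd n with h | h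
    · exact (heven h).1
    · rw [(hodd h).1]; grind
end

section
/- Let L be a real symmetric Laplacian of a connected graph with eigenvalues 0 = λ^[0] < λ^[1] ≤ … ≤ λ^[N−1] and orthonormal eigenvectors v^[ℓ], α > 0, ω > 0, and nodes k, i with graph distance d = d(k,i) ≥ 1. Define A_i^(k)(ω) = ω·|Σ_ℓ v_k^[ℓ]v_i^[ℓ]/(−ω² + iαω + λ^[ℓ])|. Then there exists a constant Φ ∈ ℝ (depending on L, α, k, i but not on ω) such that ω^{2d+1}·A_i^(k)(ω) → |Φ| as ω → ∞, where Φ is a fixed multiple of (L^d)_{ki} up to lower-order corrections; in particular A_i^(k)(ω) = O(ω^{−2d−1}). -/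
/-!
Write `c_ℓ = v_k^[ℓ] v_i^[ℓ]` and `z = -ω² + iαω`, so the response is `ω ‖Σ_ℓ c_ℓ / (z + λ_ℓ)‖`.
Expanding `1 / (z + λ)` in powers of `1 / z` up to order `d + 1` (a geometric sum),
`z^(d+1) Σ_ℓ c_ℓ / (z + λ_ℓ) = Σ_{j ≤ d} (-1)^j M_j z^(d-j) + o(1)` with moments `M_j = Σ_ℓ c_ℓ λ_ℓ^j`.
The spectral decomposition identifies `M_j = (L^j)_{ki}`, which vanishes for `j < d` because a
nonzero entry of `L^j` produces a walk of length at most `j` from `k` to `i`. Hence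
`z^(d+1) Σ_ℓ c_ℓ / (z + λ_ℓ) → (-1)^d (L^d)_{ki}`, and since `ω² / z → -1` we may take
`Φ = (L^d)_{ki}`.
-/

open Matrix Complex Filter Asymptotics

open Finset Bornology Topology

section Spectral

variable {ι R : Type*} [Fintype ι] [DecidableEq ι] [CommSemiring R]

theorem sum_apply_mul_apply_eq_ite_of_orthonormal {v : ι → ι → R}
    (horth : ∀ ℓ ℓ', ∑ j, v ℓ j * v ℓ' j = if ℓ = ℓ' then 1 else 0) (a b : ι) :
    ∑ ℓ, v ℓ a * v ℓ b = if a = b then 1 else 0 := by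
  have hrows : of v * (of v)ᵀ = 1 := by
    ext ℓ ℓ'
    simpa [mul_apply, one_apply] using horth ℓ ℓ'
  have hcols : (of v)ᵀ * of v = 1 := mul_eq_one_comm.mp hrows
  simpa [mul_apply, one_apply] using congrFun₂ hcols a b

theorem Matrix.pow_mulVec_eq_of_mulVec_eq_smul {L : Matrix ι ι R} {x : ι → R} {μ : R}
    (h : L *ᵥ x = μ • x) (m : ℕ) : L ^ m *ᵥ x = μ ^ m • x := by
  induction m with
  | zero => simp
  | succ m ih => rw [pow_succ, ← mulVec_mulVec, h, mulVec_smul, ih, smul_smul, ← pow_succ']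

theorem Matrix.pow_apply_eq_sum_of_orthonormal_eigenbasis {L : Matrix ι ι R} {lam : ι → R}
    {v : ι → ι → R} (heig : ∀ ℓ, L *ᵥ v ℓ = lam ℓ • v ℓ)
    (horth : ∀ ℓ ℓ', ∑ j, v ℓ j * v ℓ' j = if ℓ = ℓ' then 1 else 0) (m : ℕ) (a b : ι) :
    (L ^ m) a b = ∑ ℓ, v ℓ a * v ℓ b * lam ℓ ^ m := calc
  (L ^ m) a b = ∑ j, (L ^ m) a j * ∑ ℓ, v ℓ j * v ℓ b := by
    simp [sum_apply_mul_apply_eq_ite_of_orthonormal horth]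
  _ = ∑ ℓ, (L ^ m *ᵥ v ℓ) a * v ℓ b := by
    simp only [mul_sum, mulVec, dotProduct, sum_mul, mul_assoc]
    exact sum_comm
  _ = ∑ ℓ, v ℓ a * v ℓ b * lam ℓ ^ m := by
    simp only [pow_mulVec_eq_of_mulVec_eq_smul (heig _), Pi.smul_apply, smul_eq_mul]
    exact sum_congr rfl fun ℓ _ => by ring

end Spectral

section Locality

variable {V R : Type*} [Fintype V] [DecidableEq V] [Semiring R] (G : SimpleGraph V)
  {L : Matrix V V R}

theorem SimpleGraph.exists_walk_length_le_of_pow_apply_ne_zero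
    (hadj : ∀ u w, u ≠ w → L u w ≠ 0 → G.Adj u w) {m : ℕ} {a b : V} (h : (L ^ m) a b ≠ 0) :
    ∃ p : G.Walk a b, p.length ≤ m := by
  induction m generalizing b with
  | zero =>
    obtain rfl : a = b := by by_contra hab; simp [one_apply, hab] at h
    exact ⟨.nil, le_rfl⟩
  | succ m ih =>
    rw [pow_succ, mul_apply] at h
    obtain ⟨u, -, hu⟩ := exists_ne_zero_of_sum_ne_zero h
    obtain ⟨p, hp⟩ := ih (left_ne_zero_of_mul hu)
    by_cases hub : u = b
    · subst hub
      exact ⟨p, hp.trans m.le_succ⟩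
    · refine ⟨p.concat (hadj u b hub (right_ne_zero_of_mul hu)), ?_⟩
      rw [SimpleGraph.Walk.length_concat]
      omega

theorem SimpleGraph.pow_apply_eq_zero_of_lt_dist
    (hadj : ∀ u w, u ≠ w → L u w ≠ 0 → G.Adj u w) {m : ℕ} {a b : V} (hm : m < G.dist a b) :
    (L ^ m) a b = 0 := by
  by_contra h
  obtain ⟨p, hp⟩ := G.exists_walk_length_le_of_pow_apply_ne_zero hadj h
  exact (G.dist_le p).trans hp |>.not_gt hm

end Locality

section Resolvent

variable {𝕜 : Type*}

theorem pow_div_add_eq_geom_sum₂_add [Field 𝕜] {z w : 𝕜} (h : z + w ≠ 0) (n : ℕ) :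
    z ^ n / (z + w) = ∑ i ∈ range n, z ^ i * (-w) ^ (n - 1 - i) + (-w) ^ n / (z + w) := by
  rw [div_eq_iff h, add_mul, div_mul_cancel₀ _ h]
  simpa using (geom_sum₂_mul_add (z + w) (-w) n).symm

theorem pow_succ_mul_sum_div_add_eq [Field 𝕜] {ι : Type*} [Fintype ι] {c μ : ι → 𝕜} {d : ℕ}
    (hmom : ∀ j < d, ∑ ℓ, c ℓ * μ ℓ ^ j = 0) {z : 𝕜} (hz : ∀ ℓ, z + μ ℓ ≠ 0) :
    z ^ (d + 1) * ∑ ℓ, c ℓ / (z + μ ℓ)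
      = (-1) ^ d * ∑ ℓ, c ℓ * μ ℓ ^ d + ∑ ℓ, c ℓ * (-μ ℓ) ^ (d + 1) / (z + μ ℓ) := by
  have hneg : ∀ j, ∑ ℓ, c ℓ * (-μ ℓ) ^ j = (-1) ^ j * ∑ ℓ, c ℓ * μ ℓ ^ j := fun j => by
    rw [mul_sum]
    exact sum_congr rfl fun ℓ _ => by rw [neg_pow]; ring
  have hterm : ∀ ℓ, z ^ (d + 1) * (c ℓ / (z + μ ℓ)) = ∑ i ∈ range (d + 1),
      z ^ i * (c ℓ * (-μ ℓ) ^ (d - i)) + c ℓ * (-μ ℓ) ^ (d + 1) / (z + μ ℓ) := fun ℓ => by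
    rw [mul_div_left_comm, pow_div_add_eq_geom_sum₂_add (hz ℓ), mul_add, mul_sum,
      mul_div_assoc, add_tsub_cancel_right]
    exact congrArg₂ _ (sum_congr rfl fun i _ => by ring) rfl
  rw [mul_sum, sum_congr rfl fun ℓ _ => hterm ℓ, sum_add_distrib, sum_comm]
  simp only [← mul_sum]
  rw [sum_eq_single 0, pow_zero, one_mul, Nat.sub_zero, hneg]
  · intro i hi hi0
    rw [hneg, hmom _ (by have := mem_range.1 hi; omega), mul_zero, mul_zero]
  · simp

theorem tendsto_pow_succ_mul_sum_div_add_cobounded [NormedField 𝕜] {ι : Type*} [Fintype ι]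
    (c μ : ι → 𝕜) {d : ℕ} (hmom : ∀ j < d, ∑ ℓ, c ℓ * μ ℓ ^ j = 0) :
    Tendsto (fun z => z ^ (d + 1) * ∑ ℓ, c ℓ / (z + μ ℓ)) (cobounded 𝕜)
      (𝓝 ((-1) ^ d * ∑ ℓ, c ℓ * μ ℓ ^ d)) := by
  have hrem : Tendsto (fun z => ∑ ℓ, c ℓ * (-μ ℓ) ^ (d + 1) / (z + μ ℓ)) (cobounded 𝕜) (𝓝 0) := by
    simpa [div_eq_mul_inv] using tendsto_finsetSum univ fun ℓ _ =>
      (tendsto_inv₀_cobounded.comp (tendsto_add_const_cobounded (μ ℓ))).const_mul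
        (c ℓ * (-μ ℓ) ^ (d + 1))
  have hnz : ∀ᶠ z in cobounded 𝕜, ∀ ℓ, z + μ ℓ ≠ 0 := eventually_all.2 fun ℓ =>
    (tendsto_add_const_cobounded (μ ℓ)).eventually (eventually_ne_cobounded 0)
  refine (add_zero ((-1 : 𝕜) ^ d * ∑ ℓ, c ℓ * μ ℓ ^ d) ▸ hrem.const_add _).congr' ?_
  filter_upwards [hnz] with z hz
  exact (pow_succ_mul_sum_div_add_eq hmom hz).symm

end Resolvent

theorem tendsto_sq_div_damped_atTop (α : ℝ) :
    Tendsto (fun ω : ℝ => (ω : ℂ) ^ 2 / (-(ω : ℂ) ^ 2 + I * α * ω)) atTop (𝓝 (-1)) := by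
  have hinv : Tendsto (fun ω : ℝ => -1 + I * α * (ω : ℂ)⁻¹) atTop (𝓝 (-1)) := by
    simpa using ((continuous_ofReal.tendsto 0).comp tendsto_inv_atTop_zero).const_mul
      (I * α) |>.const_add (-1 : ℂ)
  have hquot : Tendsto (fun ω : ℝ => (-(ω : ℂ) ^ 2 + I * α * ω) / (ω : ℂ) ^ 2) atTop
      (𝓝 (-1)) := by
    refine hinv.congr' ?_
    filter_upwards [eventually_ne_atTop 0] with ω hω
    have : (ω : ℂ) ≠ 0 := ofReal_ne_zero.2 hω
    field_simp
  simpa using hquot.inv₀ (by norm_num)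

theorem tendsto_damped_cobounded (α : ℝ) :
    Tendsto (fun ω : ℝ => -(ω : ℂ) ^ 2 + I * α * ω) atTop (cobounded ℂ) := by
  rw [← tendsto_norm_atTop_iff_cobounded]
  refine tendsto_atTop_mono (fun ω => ?_) (tendsto_pow_atTop two_ne_zero)
  calc ω ^ 2 = |(-(ω : ℂ) ^ 2 + I * α * ω).re| := by simp [sq]
    _ ≤ _ := abs_re_le_norm _

theorem tendsto_pow_mul_norm_comp_damped {F : ℂ → ℂ} {n : ℕ} {c : ℂ} (α : ℝ)
    (hF : Tendsto (fun z => z ^ n * F z) (cobounded ℂ) (𝓝 c)) :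
    Tendsto (fun ω : ℝ => ω ^ (2 * n) * ‖F (-(ω : ℂ) ^ 2 + I * α * ω)‖) atTop (𝓝 ‖c‖) := by
  have hprod := (((tendsto_sq_div_damped_atTop α).pow n).mul
    (hF.comp (tendsto_damped_cobounded α))).norm
  rw [norm_mul, norm_pow, norm_neg, norm_one, one_pow, one_mul] at hprod
  refine hprod.congr' ?_
  filter_upwards [eventually_gt_atTop 0] with ω hω
  have hz : -(ω : ℂ) ^ 2 + I * α * ω ≠ 0 := fun h => by
    simpa [sq, hω.ne'] using congrArg re h
  simp only [Function.comp_apply, norm_mul, norm_pow, norm_div]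
  rw [norm_real, Real.norm_of_nonneg hω.le, div_pow, ← mul_assoc,
    div_mul_cancel₀ _ (pow_ne_zero _ (norm_ne_zero_iff.2 hz)), pow_mul]

theorem high_frequency_localized_response_general
    (N : ℕ) (L : Matrix (Fin N) (Fin N) ℝ)
    (lam : Fin N → ℝ) (v : Fin N → Fin N → ℝ)
    (heig : ∀ ℓ, L *ᵥ v ℓ = lam ℓ • v ℓ)
    (horth : ∀ ℓ ℓ', ∑ j, v ℓ j * v ℓ' j = if ℓ = ℓ' then 1 else 0)
    (G : SimpleGraph (Fin N)) (hG : ∀ u v : Fin N, G.Adj u v ↔ u ≠ v ∧ L u v ≠ 0)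
    (α : ℝ) (k i : Fin N) :
    ∃ Φ : ℝ,
      Tendsto
        (fun ω : ℝ => ω ^ (2 * G.dist k i + 1) *
          (ω * ‖(∑ ℓ, ((v ℓ k : ℂ) * (v ℓ i : ℂ)) /
            (-(ω : ℂ) ^ 2 + I * (α : ℂ) * (ω : ℂ) + (lam ℓ : ℂ)))‖))
        atTop (nhds |Φ|) ∧
      (fun ω : ℝ => ω * ‖(∑ ℓ, ((v ℓ k : ℂ) * (v ℓ i : ℂ)) /
          (-(ω : ℂ) ^ 2 + I * (α : ℂ) * (ω : ℂ) + (lam ℓ : ℂ)))‖)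
        =O[atTop] fun ω : ℝ => (ω ^ (2 * G.dist k i + 1))⁻¹ := by
  set d := G.dist k i
  have hmoment : ∀ j, ∑ ℓ, (v ℓ k : ℂ) * v ℓ i * (lam ℓ : ℂ) ^ j = ((L ^ j) k i : ℂ) := by
    intro j
    rw [pow_apply_eq_sum_of_orthonormal_eigenbasis heig horth]
    push_cast
    rfl
  have hlocal : ∀ j < d, (L ^ j) k i = 0 := fun j hj =>
    G.pow_apply_eq_zero_of_lt_dist (fun u w huw hL => (hG u w).2 ⟨huw, hL⟩) hj
  have hlim := tendsto_pow_mul_norm_comp_damped α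
    (tendsto_pow_succ_mul_sum_div_add_cobounded _ _ fun j hj => by
      rw [hmoment, hlocal j hj, ofReal_zero])
  rw [norm_mul, norm_pow, norm_neg, norm_one, one_pow, one_mul, hmoment, norm_real,
    Real.norm_eq_abs] at hlim
  refine ⟨(L ^ d) k i, hlim.congr fun ω => by ring,
    isBigO_of_div_tendsto_nhds ?_ _ (hlim.congr fun ω => ?_)⟩
  · filter_upwards [eventually_gt_atTop 0] with ω hω h
    exact absurd h (by positivity)
  · rw [Pi.div_apply, div_inv_eq_mul]
    ring

theorem high_frequency_localized_response
    (N : ℕ) [NeZero N] (L : Matrix (Fin N) (Fin N) ℝ) (hLsymm : L.IsSymm)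
    (lam : Fin N → ℝ) (v : Fin N → Fin N → ℝ)
    (heig : ∀ ℓ, L *ᵥ v ℓ = lam ℓ • v ℓ)
    (horth : ∀ ℓ ℓ', ∑ j, v ℓ j * v ℓ' j = if ℓ = ℓ' then 1 else 0)
    (hlam0 : lam 0 = 0) (hpos : ∀ ℓ, ℓ ≠ 0 → 0 < lam ℓ)
    (G : SimpleGraph (Fin N)) (hG : ∀ u v : Fin N, G.Adj u v ↔ u ≠ v ∧ L u v ≠ 0)
    (α : ℝ) (hα : 0 < α) (k i : Fin N) (hd : 1 ≤ G.dist k i) :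
    ∃ Φ : ℝ,
      Tendsto
        (fun ω : ℝ => ω ^ (2 * G.dist k i + 1) *
          (ω * ‖(∑ ℓ, ((v ℓ k : ℂ) * (v ℓ i : ℂ)) /
            (-(ω : ℂ) ^ 2 + I * (α : ℂ) * (ω : ℂ) + (lam ℓ : ℂ)))‖))
        atTop (nhds |Φ|) ∧
      (fun ω : ℝ => ω * ‖(∑ ℓ, ((v ℓ k : ℂ) * (v ℓ i : ℂ)) /
          (-(ω : ℂ) ^ 2 + I * (α : ℂ) * (ω : ℂ) + (lam ℓ : ℂ)))‖)
        =O[atTop] fun ω : ℝ => (ω ^ (2 * G.dist k i + 1))⁻¹ :=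
  high_frequency_localized_response_general N L lam v heig horth G hG α k i
end

section
/- Let L be a real symmetric connected-graph Laplacian with simple eigenvalue 0 and eigenvector v^[0] = (1/√N)(1,…,1), α > 0, and D* ∈ ℝ^N a constant vector. Consider Θ(t) given by formula (LRT for constant perturbations): Θ(t) = (D*·v^[0])(e^{−αt}/α² − 1/α² + t/α) v^[0] + Σ_{ℓ≥1} (D*·v^[ℓ]/λ^[ℓ])((Δ₋^[ℓ]e^{Δ₊^[ℓ]t} − Δ₊^[ℓ]e^{Δ₋^[ℓ]t})/(2η^[ℓ]) + 1) v^[ℓ], with Δ_±^[ℓ] = −α/2 ± η^[ℓ], η^[ℓ] = √(α²/4 − λ^[ℓ]) ≠ 0. Then Θ solves Θ̈ + αΘ̇ = −LΘ + D* with Θ(0) = 0 and Θ̇(0) = 0. -/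
open Matrix Complex

/-! In the orthonormal eigenbasis `v ℓ` of `L` the equation decouples into scalar equations
`x'' + α x' = -λ x + d` with `d = D ⬝ᵥ v ℓ`. If `λ ≠ 0` and `p, m` are the distinct roots of
`z² + α z + λ`, the solution starting at rest is `(d / λ) ((m e^{pt} - p e^{mt}) / (p - m) + 1)`;
if `λ = 0` it is `d (e^{-αt}/α² - 1/α² + t/α)`. Summing the modes along `v ℓ` solves the vector
equation because `L (v ℓ) = λ v ℓ` and, the rows of the square matrix `v` being orthonormal, so are
its columns, whence `D = ∑ ℓ, (D ⬝ᵥ v ℓ) v ℓ`. -/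

theorem hasDerivAt_cexp_const_mul (c : ℂ) (t : ℝ) :
    HasDerivAt (fun s : ℝ => exp (c * s)) (c * exp (c * t)) t := by
  have h := ((hasDerivAt_id (t : ℂ)).const_mul c).cexp.comp_ofReal
  simpa [mul_comm] using h

structure IsDampedResponse (α lam d : ℂ) (x : ℝ → ℂ) : Prop where
  zero : x 0 = 0
  deriv_zero : deriv x 0 = 0
  hasDerivAt : ∀ t, HasDerivAt x (deriv x t) t
  hasDerivAt_deriv : ∀ t, HasDerivAt (deriv x) (-lam * x t + d - α * deriv x t) t

namespace IsDampedResponse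

variable {α lam d : ℂ} {x : ℝ → ℂ}

theorem of_hasDerivAt (x' : ℝ → ℂ) (h0 : x 0 = 0) (h0' : x' 0 = 0)
    (hx : ∀ t, HasDerivAt x (x' t) t)
    (hx' : ∀ t, HasDerivAt x' (-lam * x t + d - α * x' t) t) :
    IsDampedResponse α lam d x := by
  have hderiv : deriv x = x' := funext fun t => (hx t).deriv
  exact ⟨h0, hderiv ▸ h0', hderiv ▸ hx, hderiv ▸ hx'⟩

theorem const_mul (h : IsDampedResponse α lam d x) (c : ℂ) :
    IsDampedResponse α lam (c * d) fun t => c * x t := by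
  refine of_hasDerivAt (fun t => c * deriv x t) (by simp [h.zero]) (by simp [h.deriv_zero])
    (fun t => (h.hasDerivAt t).const_mul c) fun t => ?_
  exact ((h.hasDerivAt_deriv t).const_mul c).congr_deriv (by ring)

end IsDampedResponse

theorem isDampedResponse_zero_lam {α : ℂ} (hα : α ≠ 0) :
    IsDampedResponse α 0 1 fun t => exp (-α * t) / α ^ 2 - 1 / α ^ 2 + t / α := by
  refine .of_hasDerivAt (fun t => (1 - exp (-α * t)) / α) (by simp) (by simp) (fun t => ?_)
    fun t => ?_
  · have h := (((hasDerivAt_cexp_const_mul (-α) t).div_const (α ^ 2)).sub_const (1 / α ^ 2)).add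
      ((ofRealCLM.hasDerivAt (x := t)).div_const α)
    exact h.congr_deriv (by rw [ofRealCLM_apply, ofReal_one]; field_simp; ring)
  · have h := (((hasDerivAt_cexp_const_mul (-α) t).const_sub 1).div_const α)
    exact h.congr_deriv (by field_simp; ring)

theorem isDampedResponse_of_roots {α lam p m e : ℂ} (he : e ≠ 0) (hdiff : p - m = 2 * e)
    (hsum : p + m = -α) (hprod : p * m = lam) :
    IsDampedResponse α lam lam fun t => (m * exp (p * t) - p * exp (m * t)) / (2 * e) + 1 := by
  obtain rfl : α = -(p + m) := by linear_combination hsum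
  subst hprod
  clear hsum
  refine .of_hasDerivAt (fun t => p * m * (exp (p * t) - exp (m * t)) / (2 * e))
    (by simp only [ofReal_zero, mul_zero, exp_zero, mul_one]; field_simp; linear_combination -hdiff)
    (by simp) (fun t => ?_) fun t => ?_
  · have h := ((((hasDerivAt_cexp_const_mul p t).const_mul m).sub
      ((hasDerivAt_cexp_const_mul m t).const_mul p)).div_const (2 * e)).add_const 1
    exact h.congr_deriv (by ring)
  · have h := (((hasDerivAt_cexp_const_mul p t).sub
      (hasDerivAt_cexp_const_mul m t)).const_mul (p * m)).div_const (2 * e)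
    exact h.congr_deriv (by field_simp; ring)

section Eigenbasis

variable {ι : Type*} [Fintype ι]

theorem sum_mul_eq_of_orthonormal_rows [DecidableEq ι] {v : ι → ι → ℝ}
    (horth : ∀ ℓ ℓ', ∑ j, v ℓ j * v ℓ' j = if ℓ = ℓ' then 1 else 0) (D : ι → ℝ) (i : ι) :
    ∑ ℓ, (∑ j, D j * v ℓ j) * v ℓ i = D i := by
  have hV : of v * (of v)ᵀ = 1 := by
    ext ℓ ℓ'
    simpa [mul_apply, one_apply] using horth ℓ ℓ'
  have hVt : (of v)ᵀ * of v = 1 := mul_eq_one_comm.mp hV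
  calc ∑ ℓ, (∑ j, D j * v ℓ j) * v ℓ i = (((of v)ᵀ * of v) *ᵥ D) i := by
        rw [← mulVec_mulVec]
        simp only [mulVec, dotProduct, transpose_apply, of_apply, mul_comm]
    _ = D i := by rw [hVt, one_mulVec]

theorem map_mulVec_sum_mul_eigenvectors {L : Matrix ι ι ℝ} {lam : ι → ℝ} {v : ι → ι → ℝ}
    (heig : ∀ ℓ, L *ᵥ v ℓ = lam ℓ • v ℓ) (c : ι → ℂ) (i : ι) :
    (L.map (algebraMap ℝ ℂ) *ᵥ fun j => ∑ ℓ, c ℓ * v ℓ j) i = ∑ ℓ, c ℓ * (lam ℓ * v ℓ i) := by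
  have hv : (fun j => ∑ ℓ, c ℓ * v ℓ j) = ∑ ℓ, c ℓ • (algebraMap ℝ ℂ ∘ v ℓ) := by
    ext j; simp [Finset.sum_apply]
  rw [hv, mulVec_sum, Finset.sum_apply]
  refine Finset.sum_congr rfl fun ℓ _ => ?_
  rw [mulVec_smul, Pi.smul_apply, ← RingHom.map_mulVec, heig]
  simp

theorem IsDampedResponse.superposition [DecidableEq ι] {L : Matrix ι ι ℝ} {lam : ι → ℝ}
    {v : ι → ι → ℝ} (heig : ∀ ℓ, L *ᵥ v ℓ = lam ℓ • v ℓ)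
    (horth : ∀ ℓ ℓ', ∑ j, v ℓ j * v ℓ' j = if ℓ = ℓ' then 1 else 0)
    {α : ℂ} {D : ι → ℝ} {x : ι → ℝ → ℂ}
    (hx : ∀ ℓ, IsDampedResponse α (lam ℓ) (∑ j, (D j : ℂ) * (v ℓ j : ℂ)) (x ℓ))
    {Θ : ℝ → ι → ℂ} (hΘ : Θ = fun t i => ∑ ℓ, x ℓ t * v ℓ i) :
    (∀ i, Θ 0 i = 0) ∧
    (∀ i, deriv (fun s => Θ s i) 0 = 0) ∧
    (∀ i t, HasDerivAt (fun s => Θ s i) (deriv (fun s => Θ s i) t) t) ∧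
    (∀ i t, HasDerivAt (deriv (fun s => Θ s i))
      (-((L.map (algebraMap ℝ ℂ) *ᵥ Θ t) i) + (D i : ℂ) - α * deriv (fun s => Θ s i) t) t) := by
  subst hΘ
  have hderiv (i : ι) (t : ℝ) :
      HasDerivAt (fun s => ∑ ℓ, x ℓ s * v ℓ i) (∑ ℓ, deriv (x ℓ) t * v ℓ i) t :=
    HasDerivAt.fun_sum fun ℓ _ => ((hx ℓ).hasDerivAt t).mul_const _
  have hderiv_eq (i : ι) :
      deriv (fun s => ∑ ℓ, x ℓ s * v ℓ i) = fun t => ∑ ℓ, deriv (x ℓ) t * v ℓ i :=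
    funext fun t => (hderiv i t).deriv
  refine ⟨fun i => by simp [(hx _).zero], fun i => by simp [hderiv_eq, (hx _).deriv_zero],
    fun i t => hderiv_eq i ▸ hderiv i t, fun i t => ?_⟩
  have hD : (D i : ℂ) = ∑ ℓ, (∑ j, (D j : ℂ) * (v ℓ j : ℂ)) * v ℓ i := by
    exact_mod_cast (sum_mul_eq_of_orthonormal_rows horth D i).symm
  rw [hderiv_eq, map_mulVec_sum_mul_eigenvectors heig, hD]
  refine (HasDerivAt.fun_sum fun ℓ _ =>
    ((hx ℓ).hasDerivAt_deriv t).mul_const (v ℓ i : ℂ)).congr_deriv ?_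
  simp only [Finset.mul_sum, ← Finset.sum_neg_distrib, ← Finset.sum_add_distrib,
    ← Finset.sum_sub_distrib]
  exact Finset.sum_congr rfl fun ℓ _ => by ring

end Eigenbasis

theorem lrt_constant_perturbation_solution_general
    (N : ℕ) [NeZero N] (L : Matrix (Fin N) (Fin N) ℝ)
    (lam : Fin N → ℝ) (v : Fin N → Fin N → ℝ)
    (heig : ∀ ℓ, L *ᵥ v ℓ = lam ℓ • v ℓ)
    (horth : ∀ ℓ ℓ', ∑ j, v ℓ j * v ℓ' j = if ℓ = ℓ' then 1 else 0)
    (hlam0 : lam 0 = 0)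
    (hpos : ∀ ℓ, ℓ ≠ 0 → 0 < lam ℓ)
    (α : ℝ) (hα : 0 < α)
    (η : Fin N → ℂ) (hη2 : ∀ ℓ, η ℓ ^ 2 = ((α ^ 2 / 4 - lam ℓ : ℝ) : ℂ))
    (hη : ∀ ℓ, ℓ ≠ 0 → η ℓ ≠ 0)
    (D : Fin N → ℝ) :
    let Δp : Fin N → ℂ := fun ℓ => -(α : ℂ) / 2 + η ℓ
    let Δm : Fin N → ℂ := fun ℓ => -(α : ℂ) / 2 - η ℓ
    let Θ : ℝ → Fin N → ℂ := fun t i =>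
      ((∑ j, (D j : ℂ) * (v 0 j : ℂ)) *
          (Complex.exp (-(α : ℂ) * (t : ℂ)) / (α : ℂ) ^ 2 - 1 / (α : ℂ) ^ 2
            + (t : ℂ) / (α : ℂ))) * (v 0 i : ℂ)
      + ∑ ℓ ∈ Finset.univ.erase 0,
          ((∑ j, (D j : ℂ) * (v ℓ j : ℂ)) / (lam ℓ : ℂ)) *
            ((Δm ℓ * Complex.exp (Δp ℓ * (t : ℂ))
              - Δp ℓ * Complex.exp (Δm ℓ * (t : ℂ))) / (2 * η ℓ) + 1) * (v ℓ i : ℂ)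
    (∀ i, Θ 0 i = 0) ∧
    (∀ i, deriv (fun s => Θ s i) 0 = 0) ∧
    (∀ i t, HasDerivAt (fun s => Θ s i) (deriv (fun s => Θ s i) t) t) ∧
    (∀ i t, HasDerivAt (deriv (fun s => Θ s i))
      (-(((L.map (algebraMap ℝ ℂ)) *ᵥ (Θ t)) i) + (D i : ℂ)
        - (α : ℂ) * deriv (fun s => Θ s i) t) t) := by
  intro Δp Δm Θ
  let x : Fin N → ℝ → ℂ := fun ℓ =>
    if ℓ = 0 then
      fun t => (∑ j, (D j : ℂ) * (v 0 j : ℂ)) * (exp (-α * t) / α ^ 2 - 1 / α ^ 2 + t / α)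
    else fun t => (∑ j, (D j : ℂ) * (v ℓ j : ℂ)) / lam ℓ *
      ((Δm ℓ * exp (Δp ℓ * t) - Δp ℓ * exp (Δm ℓ * t)) / (2 * η ℓ) + 1)
  have hx (ℓ : Fin N) : IsDampedResponse α (lam ℓ) (∑ j, (D j : ℂ) * (v ℓ j : ℂ)) (x ℓ) := by
    by_cases hℓ : ℓ = 0
    · subst hℓ
      have h := (isDampedResponse_zero_lam (ofReal_ne_zero.mpr hα.ne')).const_mul
        (∑ j, (D j : ℂ) * (v 0 j : ℂ))
      simpa [x, hlam0] using h
    · have hlam : (lam ℓ : ℂ) ≠ 0 := ofReal_ne_zero.mpr (hpos ℓ hℓ).ne'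
      have hroots : Δp ℓ * Δm ℓ = lam ℓ := by
        have h := hη2 ℓ
        push_cast at h
        linear_combination -h
      have h := (isDampedResponse_of_roots (α := α) (p := Δp ℓ) (m := Δm ℓ) (hη ℓ hℓ)
        (by ring) (by ring) hroots).const_mul ((∑ j, (D j : ℂ) * (v ℓ j : ℂ)) / lam ℓ)
      rw [div_mul_cancel₀ _ hlam] at h
      simpa only [x, if_neg hℓ] using h
  refine IsDampedResponse.superposition heig horth hx (funext fun t => funext fun i => ?_)
  rw [← Finset.add_sum_erase _ _ (Finset.mem_univ 0)]
  refine congrArg₂ (· + ·) (by simp [x]) (Finset.sum_congr rfl fun ℓ hℓ => ?_)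
  simp [x, Finset.ne_of_mem_erase hℓ]

theorem lrt_constant_perturbation_solution
    (N : ℕ) [NeZero N] (L : Matrix (Fin N) (Fin N) ℝ)
    (hLsymm : L.IsSymm) (hPSD : L.PosSemidef)
    (lam : Fin N → ℝ) (v : Fin N → Fin N → ℝ)
    (heig : ∀ ℓ, L *ᵥ v ℓ = lam ℓ • v ℓ)
    (horth : ∀ ℓ ℓ', ∑ j, v ℓ j * v ℓ' j = if ℓ = ℓ' then 1 else 0)
    (hlam0 : lam 0 = 0) (hv0 : v 0 = fun _ => 1 / Real.sqrt N)
    (hpos : ∀ ℓ, ℓ ≠ 0 → 0 < lam ℓ)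
    (α : ℝ) (hα : 0 < α)
    (η : Fin N → ℂ) (hη2 : ∀ ℓ, η ℓ ^ 2 = ((α ^ 2 / 4 - lam ℓ : ℝ) : ℂ))
    (hη : ∀ ℓ, ℓ ≠ 0 → η ℓ ≠ 0)
    (D : Fin N → ℝ) :
    let Δp : Fin N → ℂ := fun ℓ => -(α : ℂ) / 2 + η ℓ
    let Δm : Fin N → ℂ := fun ℓ => -(α : ℂ) / 2 - η ℓ
    let Θ : ℝ → Fin N → ℂ := fun t i =>
      ((∑ j, (D j : ℂ) * (v 0 j : ℂ)) *
          (Complex.exp (-(α : ℂ) * (t : ℂ)) / (α : ℂ) ^ 2 - 1 / (α : ℂ) ^ 2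
            + (t : ℂ) / (α : ℂ))) * (v 0 i : ℂ)
      + ∑ ℓ ∈ Finset.univ.erase 0,
          ((∑ j, (D j : ℂ) * (v ℓ j : ℂ)) / (lam ℓ : ℂ)) *
            ((Δm ℓ * Complex.exp (Δp ℓ * (t : ℂ))
              - Δp ℓ * Complex.exp (Δm ℓ * (t : ℂ))) / (2 * η ℓ) + 1) * (v ℓ i : ℂ)
    (∀ i, Θ 0 i = 0) ∧
    (∀ i, deriv (fun s => Θ s i) 0 = 0) ∧
    (∀ i t, HasDerivAt (fun s => Θ s i) (deriv (fun s => Θ s i) t) t) ∧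
    (∀ i t, HasDerivAt (deriv (fun s => Θ s i))
      (-(((L.map (algebraMap ℝ ℂ)) *ᵥ (Θ t)) i) + (D i : ℂ)
        - (α : ℂ) * deriv (fun s => Θ s i) t) t) :=
  lrt_constant_perturbation_solution_general N L lam v heig horth hlam0 hpos α hα η hη2 hη D
end
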